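/- arXiv:2309.00712 — 6 statements merged into one kernel-verified Lean document; each statement's English description precedes it below -/
import Mathlib

section
/- Let X : S¹ × I → ℝ² be a smooth family of compact, embedded, strictly convex plane curves solving anisotropic curve shortening flow with respect to g, and let A(t) denote the area of the region enclosed by X(·, t). Then A'(t) = −∫_{S¹} g(θ) dθ, i.e. A'(t) = −∫_0^{2π} g(θ) dθ; in particular the enclosed area decreases at a constant rate. -/
noncomputable section

open Real Set Filter intervalIntegral
open Topology

set_option maxHeartbeats 1000000

private lemma slice1 {E : Type*} [NormedAddCommGroup E] [NormedSpace ℝ E]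
    {f : ℝ × ℝ → E} {p : ℝ × ℝ} {f' : ℝ × ℝ →L[ℝ] E} (hf : HasFDerivAt f f' p) :
    HasDerivAt (fun u => f (u, p.2)) (f' (1, 0)) p.1 := by
  have h : HasDerivAt (fun u : ℝ => (u, p.2)) ((1 : ℝ), (0 : ℝ)) p.1 :=
    (hasDerivAt_id p.1).prodMk (hasDerivAt_const p.1 p.2)
  simpa [Function.comp_def] using hf.comp_hasDerivAt p.1 h

private lemma slice2 {E : Type*} [NormedAddCommGroup E] [NormedSpace ℝ E]
    {f : ℝ × ℝ → E} {p : ℝ × ℝ} {f' : ℝ × ℝ →L[ℝ] E} (hf : HasFDerivAt f f' p) :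
    HasDerivAt (fun t => f (p.1, t)) (f' (0, 1)) p.2 := by
  have h : HasDerivAt (fun t : ℝ => (p.1, t)) ((0 : ℝ), (1 : ℝ)) p.2 :=
    (hasDerivAt_const p.2 p.1).prodMk (hasDerivAt_id p.2)
  simpa [Function.comp_def] using hf.comp_hasDerivAt p.2 h

private lemma hda_fst {f : ℝ → ℝ × ℝ} {f' : ℝ × ℝ} {x : ℝ} (h : HasDerivAt f f' x) :
    HasDerivAt (fun t => (f t).1) f'.1 x := by
  simpa [Function.comp_def] using (ContinuousLinearMap.fst ℝ ℝ ℝ).hasFDerivAt.comp_hasDerivAt x h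

private lemma hda_snd {f : ℝ → ℝ × ℝ} {f' : ℝ × ℝ} {x : ℝ} (h : HasDerivAt f f' x) :
    HasDerivAt (fun t => (f t).2) f'.2 x := by
  simpa [Function.comp_def] using (ContinuousLinearMap.snd ℝ ℝ ℝ).hasFDerivAt.comp_hasDerivAt x h


/-- Euclidean dot product on the plane `ℝ × ℝ`. -/
def dot (a b : ℝ × ℝ) : ℝ := a.1 * b.1 + a.2 * b.2

/-- Partial derivative in the first (space) variable, at fixed time. -/
def pd1 {E : Type*} [NormedAddCommGroup E] [NormedSpace ℝ E]
    (f : ℝ × ℝ → E) (p : ℝ × ℝ) : E :=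
  deriv (fun u => f (u, p.2)) p.1

/-- Partial derivative in the second (time) variable, at fixed parameter `u`. -/
def pd2 {E : Type*} [NormedAddCommGroup E] [NormedSpace ℝ E]
    (f : ℝ × ℝ → E) (p : ℝ × ℝ) : E :=
  deriv (fun t => f (p.1, t)) p.2

/-- Derivative with respect to arclength along the curve `X (·, t)`:
`∂_s f = |∂_u X|⁻¹ ∂_u f`. -/
def sderiv {E : Type*} [NormedAddCommGroup E] [NormedSpace ℝ E]
    (X : ℝ × ℝ → ℝ × ℝ) (f : ℝ × ℝ → E) (p : ℝ × ℝ) : E :=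
  (Real.sqrt (dot (pd1 X p) (pd1 X p)))⁻¹ • pd1 f p

/-- For a smooth family of compact, embedded, strictly convex plane curves
(parametrized with period `2π`, positively oriented) solving anisotropic curve shortening
flow with respect to `g`, the enclosed area `A (t)` satisfies `A'(t) = −∫_0^{2π} g(θ) dθ`;
in particular the enclosed area decreases at a constant rate. -/
theorem acsf_area_evolution
    (g : ℝ → ℝ) (hg : ContDiff ℝ (⊤ : ℕ∞) g) (hgpos : ∀ x, 0 < g x)
    (hgper : Function.Periodic g (2 * π))
    (I : Set ℝ) (hIopen : IsOpen I) (hIconn : I.OrdConnected) (hIne : I.Nonempty)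
    (X : ℝ × ℝ → ℝ × ℝ) (θ κ : ℝ × ℝ → ℝ) (T N : ℝ × ℝ → ℝ × ℝ) (A : ℝ → ℝ)
    -- smoothness of the family and of the associated quantities
    (hX : ContDiffOn ℝ (⊤ : ℕ∞) X (univ ×ˢ I))
    (hθ : ContDiffOn ℝ (⊤ : ℕ∞) θ (univ ×ˢ I))
    (hκ : ContDiffOn ℝ (⊤ : ℕ∞) κ (univ ×ˢ I))
    -- the curves are closed: `2π`-periodic in the parameter, with winding number one
    (hper : ∀ u : ℝ, ∀ t ∈ I, X (u + 2 * π, t) = X (u, t))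
    (hwind : ∀ u : ℝ, ∀ t ∈ I, θ (u + 2 * π, t) = θ (u, t) + 2 * π)
    -- the curves are embedded
    (hemb : ∀ t ∈ I, InjOn (fun u => X (u, t)) (Ico (0 : ℝ) (2 * π)))
    -- the frame determined by the tangent angle
    (hT : ∀ p : ℝ × ℝ, T p = (Real.cos (θ p), Real.sin (θ p)))
    (hN : ∀ p : ℝ × ℝ, N p = (Real.sin (θ p), -Real.cos (θ p)))
    -- the curves are regular and `T` is the unit tangent: `∂_s X = T`
    (hreg : ∀ p : ℝ × ℝ, p.2 ∈ I → pd1 X p ≠ 0)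
    (htan : ∀ p : ℝ × ℝ, p.2 ∈ I → sderiv X X p = T p)
    -- strict convexity
    (hconv : ∀ p : ℝ × ℝ, p.2 ∈ I → 0 < κ p)
    -- the Frenet–Serret equations defining the curvature
    (hfrenT : ∀ p : ℝ × ℝ, p.2 ∈ I → sderiv X T p = -(κ p) • N p)
    (hfrenN : ∀ p : ℝ × ℝ, p.2 ∈ I → sderiv X N p = (κ p) • T p)
    -- the anisotropic curve shortening flow equation
    (hflow : ∀ p : ℝ × ℝ, p.2 ∈ I → pd2 X p = -(g (θ p) * κ p) • N p)
    -- `A (t)` is the area enclosed by `X (·, t)`, via Green's formula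
    (hA : ∀ t ∈ I, A t = (1 / 2) *
      ∫ u in (0 : ℝ)..(2 * π),
        ((X (u, t)).1 * (pd1 X (u, t)).2 - (X (u, t)).2 * (pd1 X (u, t)).1)) :
    ∀ t ∈ I, HasDerivAt A (-∫ ϑ in (0 : ℝ)..(2 * π), g ϑ) t := by
  intro t₀ ht₀
  -- basic regularity setup
  have hUopen : IsOpen ((univ : Set ℝ) ×ˢ I) := isOpen_univ.prod hIopen
  have hmem : ∀ p : ℝ × ℝ, p.2 ∈ I → (univ ×ˢ I) ∈ 𝓝 p := fun p hp =>
    hUopen.mem_nhds ⟨mem_univ _, hp⟩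
  have hXat : ∀ p : ℝ × ℝ, p.2 ∈ I → ContDiffAt ℝ (⊤ : ℕ∞) X p := fun p hp =>
    hX.contDiffAt (hmem p hp)
  have hXd : ∀ p : ℝ × ℝ, p.2 ∈ I → HasFDerivAt X (fderiv ℝ X p) p := fun p hp =>
    ((hXat p hp).differentiableAt (by simp)).hasFDerivAt
  have hX1d : ∀ p : ℝ × ℝ, p.2 ∈ I →
      HasFDerivAt (fderiv ℝ X) (fderiv ℝ (fderiv ℝ X) p) p := fun p hp =>
    ((((hXat p hp).fderiv_right (WithTop.coe_le_coe.2 le_top) : ContDiffAt ℝ 1 (fderiv ℝ X) p)).differentiableAt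
      one_ne_zero).hasFDerivAt
  have hsymm : ∀ p : ℝ × ℝ, p.2 ∈ I →
      fderiv ℝ (fderiv ℝ X) p (1, 0) (0, 1) = fderiv ℝ (fderiv ℝ X) p (0, 1) (1, 0) :=
    fun p hp => (hXat p hp).isSymmSndFDerivAt (by rw [minSmoothness_of_isRCLikeNormedField]; exact WithTop.coe_le_coe.2 le_top) (1, 0) (0, 1)
  have hc1 : ContinuousOn (fderiv ℝ X) (univ ×ˢ I) :=
    (hX.fderiv_of_isOpen hUopen (WithTop.coe_le_coe.2 le_top) (m := 2)).continuousOn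
  have hc2 : ContinuousOn (fderiv ℝ (fderiv ℝ X)) (univ ×ˢ I) :=
    ((hX.fderiv_of_isOpen hUopen (WithTop.coe_le_coe.2 le_top) (m := 2)).fderiv_of_isOpen hUopen
      (by norm_num) (m := 1)).continuousOn
  -- partial derivatives expressed through the Fréchet derivative
  have hpd1eq : ∀ p : ℝ × ℝ, p.2 ∈ I → pd1 X p = fderiv ℝ X p (1, 0) := fun p hp =>
    (slice1 (hXd p hp)).deriv
  have hpd2eq : ∀ p : ℝ × ℝ, p.2 ∈ I → pd2 X p = fderiv ℝ X p (0, 1) := fun p hp =>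
    (slice2 (hXd p hp)).deriv
  -- continuity of the partial derivatives on `univ ×ˢ I`
  have hpd1cOn : ContinuousOn (pd1 X) (univ ×ˢ I) :=
    (hc1.clm_apply continuousOn_const).congr (fun p hp => hpd1eq p hp.2)
  have hpd2cOn : ContinuousOn (pd2 X) (univ ×ˢ I) :=
    (hc1.clm_apply continuousOn_const).congr (fun p hp => hpd2eq p hp.2)
  have hX2cOn : ContinuousOn (fun p => fderiv ℝ (fderiv ℝ X) p (0, 1) (1, 0)) (univ ×ˢ I) :=
    (hc2.clm_apply continuousOn_const).clm_apply continuousOn_const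
  -- the mixed partial: derivative in `t` of `pd1 X`
  have hpd1t : ∀ p : ℝ × ℝ, p.2 ∈ I →
      HasDerivAt (fun t => pd1 X (p.1, t)) (fderiv ℝ (fderiv ℝ X) p (0, 1) (1, 0)) p.2 := by
    intro p hp
    have h1 : HasDerivAt (fun t => fderiv ℝ X (p.1, t)) (fderiv ℝ (fderiv ℝ X) p (0, 1)) p.2 :=
      slice2 (hX1d p hp)
    have h2 : HasDerivAt (fun t => fderiv ℝ X (p.1, t) (1, 0))
        (fderiv ℝ (fderiv ℝ X) p (0, 1) (1, 0)) p.2 := by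
      simpa using h1.clm_apply (hasDerivAt_const p.2 ((1 : ℝ), (0 : ℝ)))
    refine h2.congr_of_eventuallyEq ?_
    filter_upwards [hIopen.mem_nhds hp] with t ht
    exact hpd1eq (p.1, t) ht
  -- the mixed partial: derivative in `u` of `pd2 X` (uses Clairaut)
  have hpd2u : ∀ p : ℝ × ℝ, p.2 ∈ I →
      HasDerivAt (fun u => pd2 X (u, p.2)) (fderiv ℝ (fderiv ℝ X) p (0, 1) (1, 0)) p.1 := by
    intro p hp
    have h1 : HasDerivAt (fun u => fderiv ℝ X (u, p.2)) (fderiv ℝ (fderiv ℝ X) p (1, 0)) p.1 :=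
      slice1 (hX1d p hp)
    have h2 : HasDerivAt (fun u => fderiv ℝ X (u, p.2) (0, 1))
        (fderiv ℝ (fderiv ℝ X) p (1, 0) (0, 1)) p.1 := by
      simpa using h1.clm_apply (hasDerivAt_const p.1 ((0 : ℝ), (1 : ℝ)))
    rw [hsymm p hp] at h2
    refine h2.congr_of_eventuallyEq ?_
    have : {u : ℝ | pd2 X (u, p.2) = fderiv ℝ X (u, p.2) (0, 1)} = univ := by
      ext u; simp [hpd2eq (u, p.2) hp]
    filter_upwards with u
    exact hpd2eq (u, p.2) hp
  -- the time derivative of the area integrand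
  set Q : ℝ × ℝ → ℝ := fun p =>
    (pd2 X p).1 * (pd1 X p).2 + (X p).1 * (fderiv ℝ (fderiv ℝ X) p (0, 1) (1, 0)).2 -
      ((pd2 X p).2 * (pd1 X p).1 + (X p).2 * (fderiv ℝ (fderiv ℝ X) p (0, 1) (1, 0)).1) with hQdef
  have hQcOn : ContinuousOn Q (univ ×ˢ I) := by
    apply ContinuousOn.sub
    · exact ((continuous_fst.comp_continuousOn hpd2cOn).mul
        (continuous_snd.comp_continuousOn hpd1cOn)).add
        ((continuous_fst.comp_continuousOn hX.continuousOn).mul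
          (continuous_snd.comp_continuousOn hX2cOn))
    · exact ((continuous_snd.comp_continuousOn hpd2cOn).mul
        (continuous_fst.comp_continuousOn hpd1cOn)).add
        ((continuous_snd.comp_continuousOn hX.continuousOn).mul
          (continuous_fst.comp_continuousOn hX2cOn))
  have hfcOn : ContinuousOn (fun p : ℝ × ℝ =>
      (X p).1 * (pd1 X p).2 - (X p).2 * (pd1 X p).1) (univ ×ˢ I) :=
    ((continuous_fst.comp_continuousOn hX.continuousOn).mul
      (continuous_snd.comp_continuousOn hpd1cOn)).sub
      ((continuous_snd.comp_continuousOn hX.continuousOn).mul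
        (continuous_fst.comp_continuousOn hpd1cOn))
  have hline : ∀ x ∈ I, ∀ f : ℝ × ℝ → ℝ, ContinuousOn f (univ ×ˢ I) →
      Continuous (fun u => f (u, x)) := by
    intro x hx f hf
    exact hf.comp_continuous (continuous_id.prodMk continuous_const)
      (fun u => ⟨mem_univ _, hx⟩)
  -- derivative of the integrand in time
  have h_diffQ : ∀ p : ℝ × ℝ, p.2 ∈ I →
      HasDerivAt (fun t => (X (p.1, t)).1 * (pd1 X (p.1, t)).2 -
        (X (p.1, t)).2 * (pd1 X (p.1, t)).1) (Q p) p.2 := by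
    intro p hp
    have hXt : HasDerivAt (fun t => X (p.1, t)) (pd2 X p) p.2 := by
      rw [hpd2eq p hp]; exact slice2 (hXd p hp)
    have hBt := hpd1t p hp
    exact ((hda_fst hXt).mul (hda_snd hBt)).sub ((hda_snd hXt).mul (hda_fst hBt))
  -- choose a compact time window inside `I`
  obtain ⟨ε, hε, hball⟩ := Metric.isOpen_iff.1 hIopen t₀ ht₀
  set δ : ℝ := ε / 2 with hδdef
  have hδpos : 0 < δ := by positivity
  have hIccI : Icc (t₀ - δ) (t₀ + δ) ⊆ I := by
    intro x hx
    apply hball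
    rw [Metric.mem_ball, Real.dist_eq]
    have h1 : x - t₀ ≤ δ := by linarith [hx.2]
    have h2 : -(δ) ≤ x - t₀ := by linarith [hx.1]
    have : |x - t₀| ≤ δ := abs_le.2 ⟨h2, h1⟩
    linarith [this, hδpos]
  have hballIcc : Metric.ball t₀ δ ⊆ Icc (t₀ - δ) (t₀ + δ) := by
    intro x hx
    rw [Metric.mem_ball, Real.dist_eq] at hx
    have := abs_le.1 hx.le
    exact ⟨by linarith [this.1], by linarith [this.2]⟩
  have hballI : Metric.ball t₀ δ ⊆ I := fun x hx => hIccI (hballIcc hx)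
  -- uniform bound on `Q` over the compact set
  have hK : IsCompact (Icc (0 : ℝ) (2 * π) ×ˢ Icc (t₀ - δ) (t₀ + δ)) :=
    isCompact_Icc.prod isCompact_Icc
  have hKU : (Icc (0 : ℝ) (2 * π) ×ˢ Icc (t₀ - δ) (t₀ + δ)) ⊆ univ ×ˢ I :=
    prod_mono (subset_univ _) hIccI
  obtain ⟨C, hC⟩ := hK.exists_bound_of_continuousOn (hQcOn.mono hKU)
  -- differentiate under the integral sign
  have hmain : HasDerivAt (fun x => ∫ u in (0 : ℝ)..(2 * π),
      ((X (u, x)).1 * (pd1 X (u, x)).2 - (X (u, x)).2 * (pd1 X (u, x)).1))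
      (∫ u in (0 : ℝ)..(2 * π), Q (u, t₀)) t₀ := by
    have h2π : (0 : ℝ) ≤ 2 * π := by positivity
    have hIoc : Set.uIoc (0 : ℝ) (2 * π) = Ioc (0 : ℝ) (2 * π) := uIoc_of_le h2π
    refine (intervalIntegral.hasDerivAt_integral_of_dominated_loc_of_deriv_le
      (F := fun x u => (X (u, x)).1 * (pd1 X (u, x)).2 - (X (u, x)).2 * (pd1 X (u, x)).1)
      (F' := fun x u => Q (u, x)) (bound := fun _ => C) (Metric.ball_mem_nhds t₀ hδpos) ?_ ?_ ?_ ?_ ?_ ?_).2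
    · filter_upwards [hIopen.mem_nhds ht₀] with x hx
      exact ((hline x hx _ hfcOn)).aestronglyMeasurable
    · exact (hline t₀ ht₀ _ hfcOn).intervalIntegrable 0 (2 * π)
    · exact (hline t₀ ht₀ _ hQcOn).aestronglyMeasurable
    · refine Filter.Eventually.of_forall (fun u hu x hx => ?_)
      refine hC (u, x) ?_
      rw [hIoc] at hu
      exact ⟨Ioc_subset_Icc_self hu, hballIcc hx⟩
    · exact intervalIntegrable_const
    · refine Filter.Eventually.of_forall (fun u hu x hx => ?_)
      exact h_diffQ (u, x) (hballI hx)
  -- `A` agrees with the parametric integral near `t₀`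
  have hAderiv : HasDerivAt A ((1 / 2) * ∫ u in (0 : ℝ)..(2 * π), Q (u, t₀)) t₀ := by
    refine (hmain.const_mul (1 / 2)).congr_of_eventuallyEq ?_
    filter_upwards [hIopen.mem_nhds ht₀] with t ht
    exact hA t ht
  -- It remains to compute the integral of `Q (·, t₀)`.
  suffices hval : (1 / 2) * ∫ u in (0 : ℝ)..(2 * π), Q (u, t₀) =
      -∫ ϑ in (0 : ℝ)..(2 * π), g ϑ by
    rwa [hval] at hAderiv
  -- the antiderivative of `g`
  set Φ : ℝ → ℝ := fun x => ∫ s in (0 : ℝ)..x, g s with hΦdef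
  set W : ℝ → ℝ := fun u => -Φ (θ (u, t₀)) + (1 / 2) *
    ((X (u, t₀)).1 * (pd2 X (u, t₀)).2 - (X (u, t₀)).2 * (pd2 X (u, t₀)).1) with hWdef
  -- `W` is an antiderivative of `(1/2) Q (·, t₀)`
  have hW : ∀ u : ℝ, HasDerivAt W ((1 / 2) * Q (u, t₀)) u := by
    intro u
    have hp : ((u, t₀) : ℝ × ℝ).2 ∈ I := ht₀
    set p : ℝ × ℝ := (u, t₀) with hpdef
    -- the tangent-angle derivative
    have hθd : HasFDerivAt θ (fderiv ℝ θ p) p :=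
      ((hθ.contDiffAt (hmem p hp)).differentiableAt (by simp)).hasFDerivAt
    set θup : ℝ := fderiv ℝ θ p (1, 0) with hθupdef
    have hθu : HasDerivAt (fun u => θ (u, t₀)) θup u := slice1 hθd
    -- derivative of the antiderivative of g
    have hΦθ : HasDerivAt (fun u => Φ (θ (u, t₀))) (g (θ p) * θup) u :=
      by have h := HasDerivAt.comp u ((hg.continuous.integral_hasStrictDerivAt 0 (θ p)).hasDerivAt) hθu; exact h
    -- derivatives of the curve quantities in u
    have hXu : HasDerivAt (fun u => X (u, t₀)) (pd1 X p) u := by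
      rw [hpd1eq p hp]; exact slice1 (hXd p hp)
    have hCt : HasDerivAt (fun u => pd2 X (u, t₀))
        (fderiv ℝ (fderiv ℝ X) p (0, 1) (1, 0)) u := hpd2u p hp
    have hprod : HasDerivAt (fun u => (X (u, t₀)).1 * (pd2 X (u, t₀)).2 -
        (X (u, t₀)).2 * (pd2 X (u, t₀)).1)
        ((pd1 X p).1 * (pd2 X p).2 + (X p).1 * (fderiv ℝ (fderiv ℝ X) p (0, 1) (1, 0)).2 -
          ((pd1 X p).2 * (pd2 X p).1 + (X p).2 * (fderiv ℝ (fderiv ℝ X) p (0, 1) (1, 0)).1)) u :=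
      ((hda_fst hXu).mul (hda_snd hCt)).sub ((hda_snd hXu).mul (hda_fst hCt))
    have hWd : HasDerivAt W (-(g (θ p) * θup) + (1 / 2) *
        ((pd1 X p).1 * (pd2 X p).2 + (X p).1 * (fderiv ℝ (fderiv ℝ X) p (0, 1) (1, 0)).2 -
          ((pd1 X p).2 * (pd2 X p).1 + (X p).2 * (fderiv ℝ (fderiv ℝ X) p (0, 1) (1, 0)).1))) u :=
      (hΦθ.neg).add (hprod.const_mul (1 / 2))
    -- the key geometric identity
    -- `r` is the speed
    set r : ℝ := Real.sqrt (dot (pd1 X p) (pd1 X p)) with hrdef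
    have hrpos : 0 < r := by
      rw [hrdef]
      apply Real.sqrt_pos.2
      have hb := hreg p hp
      have hne : (pd1 X p).1 ≠ 0 ∨ (pd1 X p).2 ≠ 0 := by
        by_contra h
        push_neg at h
        exact hb (Prod.ext h.1 h.2)
      show 0 < (pd1 X p).1 * (pd1 X p).1 + (pd1 X p).2 * (pd1 X p).2
      rcases hne with h | h
      · nlinarith [mul_self_pos.2 h, mul_self_nonneg (pd1 X p).2]
      · nlinarith [mul_self_pos.2 h, mul_self_nonneg (pd1 X p).1]
    -- the speed relation: `pd1 X p = r • T p`
    have hb : pd1 X p = r • T p := by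
      have h := htan p hp
      rw [show sderiv X X p = r⁻¹ • pd1 X p from rfl] at h
      rw [← h, smul_smul, mul_inv_cancel₀ hrpos.ne', one_smul]
    -- `θup = κ p * r`
    have hθup_eq : θup = κ p * r := by
      have hTd : HasDerivAt (fun u => T (u, t₀))
          ((-Real.sin (θ p) * θup, Real.cos (θ p) * θup)) u := by
        have hfun : (fun u : ℝ => T (u, t₀)) =
            fun u => (Real.cos (θ (u, t₀)), Real.sin (θ (u, t₀))) :=
          funext fun u => hT (u, t₀)
        rw [hfun]
        exact ((Real.hasDerivAt_cos (θ p)).comp u hθu).prodMk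
          ((Real.hasDerivAt_sin (θ p)).comp u hθu)
      have hpdT : pd1 T p = (-Real.sin (θ p) * θup, Real.cos (θ p) * θup) := hTd.deriv
      have hfr := hfrenT p hp
      rw [show sderiv X T p = r⁻¹ • pd1 T p from rfl, hpdT, hN p] at hfr
      have e1 : r⁻¹ * (-Real.sin (θ p) * θup) = -κ p * Real.sin (θ p) := congrArg Prod.fst hfr
      have e2 : r⁻¹ * (Real.cos (θ p) * θup) = -κ p * -Real.cos (θ p) := congrArg Prod.snd hfr
      have hpyth := Real.sin_sq_add_cos_sq (θ p)
      have e3 : r⁻¹ * θup = κ p := by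
        linear_combination (-Real.sin (θ p)) * e1 + Real.cos (θ p) * e2 -
          (r⁻¹ * θup - κ p) * hpyth
      field_simp at e3
      linarith [e3]
    -- the flow equation gives the components of `pd2 X p`
    have hkey : (pd2 X p).1 * (pd1 X p).2 - (pd2 X p).2 * (pd1 X p).1 = -(g (θ p) * θup) := by
      rw [hflow p hp, hN p, hb, hT p]
      have hpyth := Real.sin_sq_add_cos_sq (θ p)
      simp only [Prod.smul_fst, Prod.smul_snd, Prod.fst, Prod.snd, smul_eq_mul]
      rw [hθup_eq]
      linear_combination (-(g (θ p) * κ p * r)) * hpyth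
    -- assemble
    convert hWd using 1
    rw [hQdef]
    linarith [hkey]
  -- FTC in `u` along the curve at time `t₀`
  have hQline : Continuous (fun u => Q (u, t₀)) := hline t₀ ht₀ _ hQcOn
  have hFTC : ∫ u in (0 : ℝ)..(2 * π), (1 / 2) * Q (u, t₀) = W (2 * π) - W 0 :=
    intervalIntegral.integral_eq_sub_of_hasDerivAt (fun u _ => hW u)
      ((continuous_const.mul hQline).intervalIntegrable 0 (2 * π))
  rw [← intervalIntegral.integral_const_mul, hFTC]
  -- periodicity relations at time `t₀`
  have hθw : θ (2 * π, t₀) = θ (0, t₀) + 2 * π := by simpa using hwind 0 t₀ ht₀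
  have hXw : X (2 * π, t₀) = X (0, t₀) := by simpa using hper 0 t₀ ht₀
  have hpd2w : pd2 X (2 * π, t₀) = pd2 X (0, t₀) := by
    show deriv (fun t => X (2 * π, t)) t₀ = deriv (fun t => X (0, t)) t₀
    apply Filter.EventuallyEq.deriv_eq
    filter_upwards [hIopen.mem_nhds ht₀] with t ht
    simpa using hper 0 t ht
  have hgint : ∀ a b : ℝ, IntervalIntegrable g MeasureTheory.volume a b :=
    fun a b => hg.continuous.intervalIntegrable a b
  have hΦsub : Φ (θ (0, t₀) + 2 * π) - Φ (θ (0, t₀)) = ∫ ϑ in (0 : ℝ)..(2 * π), g ϑ := by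
    rw [hΦdef]
    simp only []
    rw [intervalIntegral.integral_interval_sub_left (hgint 0 (θ (0, t₀) + 2 * π))
      (hgint 0 (θ (0, t₀)))]
    simpa using hgper.intervalIntegral_add_eq (θ (0, t₀)) 0
  simp only [hWdef]
  rw [hθw, hXw, hpd2w]
  linarith [hΦsub]
end
end

section
/- Let g : ℝ → ℝ be smooth, 2π-periodic and strictly positive, let ψ ∈ ℝ, v = (cos ψ, sin ψ), and x₀, y₀ ∈ ℝ. Define Γ : (ψ − π, ψ) → ℝ² by Γ(θ) = (x₀ + ∫_{ψ−π/2}^{θ} cos(u)·g(u)/sin(ψ−u) du, y₀ + ∫_{ψ−π/2}^{θ} sin(u)·g(u)/sin(ψ−u) du). Then Γ is a smooth immersed curve with Γ'(θ) = (g(θ)/sin(ψ−θ))·(cos θ, sin θ), so its tangent angle at Γ(θ) is θ and its curvature there is κ(θ) = sin(ψ−θ)/g(θ) > 0; moreover ⟨v, N(θ)⟩ = −g(θ)κ(θ) where N(θ) = (sin θ, −cos θ). Consequently the family X(θ, t) = Γ(θ) + t·v is a translating solution of anisotropic curve shortening flow with respect to g, travelling in direction v with speed 1. -/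
noncomputable section

open Real Set Filter intervalIntegral

open scoped ENNReal NNReal

private lemma integral_hasDerivAt_aux
    (g : ℝ → ℝ) (hg : Continuous g) (ψ : ℝ) (h : ℝ → ℝ) (hc : Continuous h)
    {θ : ℝ} (hθ : θ ∈ Ioo (ψ - π) ψ) :
    HasDerivAt (fun x => ∫ u in (ψ - π / 2)..x, h u * g u / Real.sin (ψ - u))
      (h θ * g θ / Real.sin (ψ - θ)) θ := by
  have hpi : (0 : ℝ) < π := Real.pi_pos
  have ha : ψ - π / 2 ∈ Ioo (ψ - π) ψ := by constructor <;> nlinarith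
  have hsin : ∀ u ∈ Ioo (ψ - π) ψ, 0 < Real.sin (ψ - u) := by
    intro u hu
    exact Real.sin_pos_of_pos_of_lt_pi (by linarith [hu.2]) (by linarith [hu.1])
  have hmeas : Measurable (fun u => h u * g u / Real.sin (ψ - u)) :=
    ((hc.mul hg).measurable).div
      ((Real.continuous_sin.comp (continuous_const.sub continuous_id)).measurable)
  have hsub : uIcc (ψ - π / 2) θ ⊆ Ioo (ψ - π) ψ :=
    (Set.ordConnected_Ioo).uIcc_subset ha hθ
  have hcontOn : ContinuousOn (fun u => h u * g u / Real.sin (ψ - u)) (uIcc (ψ - π / 2) θ) := by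
    apply ContinuousOn.div
    · exact (hc.mul hg).continuousOn
    · exact (Real.continuous_sin.comp (continuous_const.sub continuous_id)).continuousOn
    · intro u hu
      exact (hsin u (hsub hu)).ne'
  have hint : IntervalIntegrable (fun u => h u * g u / Real.sin (ψ - u))
      MeasureTheory.volume (ψ - π / 2) θ := hcontOn.intervalIntegrable
  have hca : ContinuousAt (fun u => h u * g u / Real.sin (ψ - u)) θ := by
    apply ContinuousAt.div
    · exact (hc.mul hg).continuousAt
    · exact (Real.continuous_sin.comp (continuous_const.sub continuous_id)).continuousAt
    · exact (hsin θ hθ).ne'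
  exact intervalIntegral.integral_hasDerivAt_right hint
    hmeas.stronglyMeasurable.stronglyMeasurableAtFilter hca

/-- The curve
`Γ(θ) = (x₀ + ∫_{ψ−π/2}^θ cos u · g(u)/sin(ψ−u) du, y₀ + ∫_{ψ−π/2}^θ sin u · g(u)/sin(ψ−u) du)`
is a smooth immersed curve on `(ψ−π, ψ)` with `Γ'(θ) = (g(θ)/sin(ψ−θ))·(cos θ, sin θ)`;
hence its tangent angle at `Γ(θ)` is `θ`, its curvature is `κ(θ) = sin(ψ−θ)/g(θ) > 0`, and
`⟨v, N(θ)⟩ = −g(θ)κ(θ)` for `v = (cos ψ, sin ψ)`, `N(θ) = (sin θ, −cos θ)`. Consequently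
`X(θ, t) = Γ(θ) + t·v` is a translating solution of anisotropic curve shortening flow with
respect to `g`, travelling in direction `v` with speed `1`: its velocity is the constant
unit vector `v` and its normal velocity equals `−g(θ)κ(θ)`. -/
theorem acsf_translator_construction
    (g : ℝ → ℝ) (hg : ContDiff ℝ (⊤ : ℕ∞) g) (hgpos : ∀ x, 0 < g x)
    (hgper : Function.Periodic g (2 * π))
    (ψ x₀ y₀ : ℝ)
    (Γ : ℝ → ℝ × ℝ) (κ : ℝ → ℝ)
    (hΓ : ∀ θ : ℝ, Γ θ =
      (x₀ + ∫ u in (ψ - π / 2)..θ, Real.cos u * g u / Real.sin (ψ - u),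
       y₀ + ∫ u in (ψ - π / 2)..θ, Real.sin u * g u / Real.sin (ψ - u)))
    (hκ : ∀ θ : ℝ, κ θ = Real.sin (ψ - θ) / g θ) :
    -- `Γ` is smooth on `(ψ − π, ψ)`
    ContDiffOn ℝ (⊤ : ℕ∞) Γ (Ioo (ψ - π) ψ) ∧
    ∀ θ ∈ Ioo (ψ - π) ψ,
      -- `Γ` is an immersion with tangent angle `θ` at `Γ(θ)`
      HasDerivAt Γ ((g θ / Real.sin (ψ - θ)) • ((Real.cos θ, Real.sin θ) : ℝ × ℝ)) θ ∧
      (g θ / Real.sin (ψ - θ)) • ((Real.cos θ, Real.sin θ) : ℝ × ℝ) ≠ 0 ∧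
      -- the curvature is positive
      0 < κ θ ∧
      -- the translator equation `⟨v, N(θ)⟩ = −g(θ)κ(θ)`
      dot (Real.cos ψ, Real.sin ψ) (Real.sin θ, -Real.cos θ) = -(g θ * κ θ) ∧
      -- `X(θ, t) = Γ(θ) + t·v` moves with velocity `v` and normal velocity `−g(θ)κ(θ)`
      ∀ t : ℝ,
        HasDerivAt (fun t' : ℝ => Γ θ + t' • ((Real.cos ψ, Real.sin ψ) : ℝ × ℝ))
          ((Real.cos ψ, Real.sin ψ) : ℝ × ℝ) t ∧
        dot (Real.cos ψ, Real.sin ψ) (Real.sin θ, -Real.cos θ) = -(g θ * κ θ) := by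
  have hΓfun : Γ = fun θ =>
      ((x₀ + ∫ u in (ψ - π / 2)..θ, Real.cos u * g u / Real.sin (ψ - u),
        y₀ + ∫ u in (ψ - π / 2)..θ, Real.sin u * g u / Real.sin (ψ - u)) : ℝ × ℝ) :=
    funext hΓ
  have hgc : Continuous g := hg.continuous
  have hsin : ∀ u ∈ Ioo (ψ - π) ψ, 0 < Real.sin (ψ - u) := by
    intro u hu
    exact Real.sin_pos_of_pos_of_lt_pi (by linarith [hu.2]) (by linarith [hu.1])
  have hopen : IsOpen (Ioo (ψ - π) ψ) := isOpen_Ioo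
  -- derivative of Γ at each θ in the interval
  have hderiv : ∀ θ ∈ Ioo (ψ - π) ψ,
      HasDerivAt Γ ((g θ / Real.sin (ψ - θ)) • ((Real.cos θ, Real.sin θ) : ℝ × ℝ)) θ := by
    intro θ hθ
    have h1 := (integral_hasDerivAt_aux g hgc ψ Real.cos Real.continuous_cos hθ).const_add x₀
    have h2 := (integral_hasDerivAt_aux g hgc ψ Real.sin Real.continuous_sin hθ).const_add y₀
    have h3 := h1.prodMk h2
    rw [hΓfun]
    convert h3 using 1
    simp only [Prod.smul_mk, smul_eq_mul, Prod.mk.injEq]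
    constructor <;> ring
  -- smoothness via analyticity of primitives
  have hsmooth : ContDiffOn ℝ (⊤ : ℕ∞) Γ (Ioo (ψ - π) ψ) := by
    rw [contDiffOn_infty_iff_deriv_of_isOpen hopen]
    refine ⟨fun θ hθ => (hderiv θ hθ).differentiableAt.differentiableWithinAt, ?_⟩
    have hcd : ContDiffOn ℝ (⊤ : ℕ∞) (fun θ => (g θ / Real.sin (ψ - θ)) •
        ((Real.cos θ, Real.sin θ) : ℝ × ℝ)) (Ioo (ψ - π) ψ) := by
      have hf : ContDiffOn ℝ (⊤ : ℕ∞) (fun θ => g θ / Real.sin (ψ - θ)) (Ioo (ψ - π) ψ) := by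
        apply ContDiffOn.div hg.contDiffOn
        · exact (Real.contDiff_sin.comp (contDiff_const.sub contDiff_id)).contDiffOn
        · intro u hu
          exact (hsin u hu).ne'
      exact hf.smul (Real.contDiff_cos.prodMk Real.contDiff_sin).contDiffOn
    exact hcd.congr (fun θ hθ => (hderiv θ hθ).deriv)
  refine ⟨hsmooth, fun θ hθ => ?_⟩
  have hsθ : 0 < Real.sin (ψ - θ) := hsin θ hθ
  have hgθ : 0 < g θ := hgpos θ
  have hdot : dot (Real.cos ψ, Real.sin ψ) (Real.sin θ, -Real.cos θ) = -(g θ * κ θ) := by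
    rw [hκ θ]
    have hrw : g θ * (Real.sin (ψ - θ) / g θ) = Real.sin (ψ - θ) := by
      field_simp
    rw [hrw, dot, Real.sin_sub]
    ring
  refine ⟨hderiv θ hθ, ?_, ?_, hdot, fun t => ⟨?_, hdot⟩⟩
  · intro h
    have h1 : g θ / Real.sin (ψ - θ) * Real.cos θ = 0 := congrArg Prod.fst h
    have h2 : g θ / Real.sin (ψ - θ) * Real.sin θ = 0 := congrArg Prod.snd h
    have hne : g θ / Real.sin (ψ - θ) ≠ 0 := (div_pos hgθ hsθ).ne'
    have hc0 : Real.cos θ = 0 := by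
      rcases mul_eq_zero.1 h1 with h' | h'
      · exact absurd h' hne
      · exact h'
    have hs0 : Real.sin θ = 0 := by
      rcases mul_eq_zero.1 h2 with h' | h'
      · exact absurd h' hne
      · exact h'
    have hpyth := Real.sin_sq_add_cos_sq θ
    rw [hc0, hs0] at hpyth
    norm_num at hpyth
  · rw [hκ θ]; exact div_pos hsθ hgθ
  · have hlin : HasDerivAt (fun t' : ℝ => t' • ((Real.cos ψ, Real.sin ψ) : ℝ × ℝ))
        ((Real.cos ψ, Real.sin ψ) : ℝ × ℝ) t := by
      simpa using (hasDerivAt_id t).smul_const ((Real.cos ψ, Real.sin ψ) : ℝ × ℝ)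
    exact hlin.const_add (Γ θ)
end
end

section
/- Let g : ℝ → ℝ be smooth, 2π-periodic and strictly positive, ψ ∈ ℝ, v = (cos ψ, sin ψ), and let Γ : (ψ − π, ψ) → ℝ² be the translator curve Γ(θ) = (x₀ + ∫_{ψ−π/2}^{θ} cos(u)·g(u)/sin(ψ−u) du, y₀ + ∫_{ψ−π/2}^{θ} sin(u)·g(u)/sin(ψ−u) du). Then ⟨Γ(θ), v⟩ ≥ x₀cos ψ + y₀ sin ψ − (min g)·log(sin(ψ−θ)) for all θ ∈ (ψ−π, ψ); in particular ⟨Γ(θ), v⟩ → +∞ both as θ → ψ⁻ and as θ → (ψ−π)⁺, so the translator is asymptotic to lines in the direction v at both ends. -/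
noncomputable section

open Real Set Filter intervalIntegral

/-- For the translator curve
`Γ(θ) = (x₀ + ∫_{ψ−π/2}^θ cos u · g(u)/sin(ψ−u) du, y₀ + ∫_{ψ−π/2}^θ sin u · g(u)/sin(ψ−u) du)`
in direction `v = (cos ψ, sin ψ)`, one has
`⟨Γ(θ), v⟩ ≥ x₀ cos ψ + y₀ sin ψ − (min g)·log(sin(ψ−θ))` for all `θ ∈ (ψ−π, ψ)`;
in particular `⟨Γ(θ), v⟩ → +∞` as `θ → ψ⁻` and as `θ → (ψ−π)⁺`: the translator is
asymptotic to lines in the direction `v` at both ends. -/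
theorem acsf_translator_asymptotics
    (g : ℝ → ℝ) (hg : ContDiff ℝ (⊤ : ℕ∞) g) (hgpos : ∀ x, 0 < g x)
    (hgper : Function.Periodic g (2 * π))
    (ψ x₀ y₀ : ℝ)
    (m : ℝ) (hm : IsLeast (Set.range g) m)
    (Γ : ℝ → ℝ × ℝ)
    (hΓ : ∀ θ : ℝ, Γ θ =
      (x₀ + ∫ u in (ψ - π / 2)..θ, Real.cos u * g u / Real.sin (ψ - u),
       y₀ + ∫ u in (ψ - π / 2)..θ, Real.sin u * g u / Real.sin (ψ - u))) :
    (∀ θ ∈ Ioo (ψ - π) ψ,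
      x₀ * Real.cos ψ + y₀ * Real.sin ψ - m * Real.log (Real.sin (ψ - θ)) ≤
        dot (Γ θ) (Real.cos ψ, Real.sin ψ)) ∧
    Tendsto (fun θ => dot (Γ θ) (Real.cos ψ, Real.sin ψ))
      (nhdsWithin ψ (Ioo (ψ - π) ψ)) atTop ∧
    Tendsto (fun θ => dot (Γ θ) (Real.cos ψ, Real.sin ψ))
      (nhdsWithin (ψ - π) (Ioo (ψ - π) ψ)) atTop := by
  have hπ : (0:ℝ) < π := pi_pos
  obtain ⟨⟨z, hz⟩, hmle⟩ := hm
  have hmpos : 0 < m := hz ▸ hgpos z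
  have hmg : ∀ u, m ≤ g u := fun u => hmle ⟨u, rfl⟩
  set a : ℝ := ψ - π/2 with ha
  have hgc : Continuous g := hg.continuous
  have hsin : ∀ u ∈ Ioo (ψ - π) ψ, 0 < Real.sin (ψ - u) := fun u hu =>
    Real.sin_pos_of_pos_of_lt_pi (by linarith [hu.2]) (by linarith [hu.1])
  have haI : a ∈ Ioo (ψ - π) ψ := ⟨by rw [ha]; linarith, by rw [ha]; linarith⟩
  have hsub : ∀ θ ∈ Ioo (ψ - π) ψ, Set.uIcc a θ ⊆ Ioo (ψ - π) ψ := fun θ hθ =>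
    (Set.ordConnected_Ioo).uIcc_subset haI hθ
  have hcont : ∀ (F : ℝ → ℝ), Continuous F →
      ContinuousOn (fun u => F u / Real.sin (ψ - u)) (Ioo (ψ - π) ψ) := by
    intro F hF
    apply ContinuousOn.div hF.continuousOn
      ((Real.continuous_sin.comp (continuous_const.sub continuous_id)).continuousOn)
    exact fun u hu => (hsin u hu).ne'
  have hintf : ∀ θ ∈ Ioo (ψ - π) ψ, ∀ (F : ℝ → ℝ), Continuous F →
      IntervalIntegrable (fun u => F u / Real.sin (ψ - u)) MeasureTheory.volume a θ := by
    intro θ hθ F hF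
    exact ((hcont F hF).mono (hsub θ hθ)).intervalIntegrable
  -- the dot product identity
  have hdot : ∀ θ ∈ Ioo (ψ - π) ψ,
      dot (Γ θ) (Real.cos ψ, Real.sin ψ) =
        x₀ * Real.cos ψ + y₀ * Real.sin ψ +
          ∫ u in a..θ, Real.cos (ψ - u) * g u / Real.sin (ψ - u) := by
    intro θ hθ
    have h1 : IntervalIntegrable (fun u => Real.cos ψ * (Real.cos u * g u) / Real.sin (ψ - u))
        MeasureTheory.volume a θ :=
      hintf θ hθ _ (continuous_const.mul (Real.continuous_cos.mul hgc))
    have h2 : IntervalIntegrable (fun u => Real.sin ψ * (Real.sin u * g u) / Real.sin (ψ - u))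
        MeasureTheory.volume a θ :=
      hintf θ hθ _ (continuous_const.mul (Real.continuous_sin.mul hgc))
    have key : ∫ u in a..θ, Real.cos (ψ - u) * g u / Real.sin (ψ - u)
        = (∫ u in a..θ, Real.cos ψ * (Real.cos u * g u) / Real.sin (ψ - u))
          + ∫ u in a..θ, Real.sin ψ * (Real.sin u * g u) / Real.sin (ψ - u) := by
      rw [← intervalIntegral.integral_add h1 h2]
      apply intervalIntegral.integral_congr
      intro u _
      show Real.cos (ψ - u) * g u / Real.sin (ψ - u)
        = Real.cos ψ * (Real.cos u * g u) / Real.sin (ψ - u)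
          + Real.sin ψ * (Real.sin u * g u) / Real.sin (ψ - u)
      rw [Real.cos_sub]
      ring
    have e1 : (∫ u in a..θ, Real.cos ψ * (Real.cos u * g u) / Real.sin (ψ - u))
        = Real.cos ψ * ∫ u in a..θ, Real.cos u * g u / Real.sin (ψ - u) := by
      rw [← intervalIntegral.integral_const_mul]
      apply intervalIntegral.integral_congr
      intro u _
      show Real.cos ψ * (Real.cos u * g u) / Real.sin (ψ - u)
        = Real.cos ψ * (Real.cos u * g u / Real.sin (ψ - u))
      ring
    have e2 : (∫ u in a..θ, Real.sin ψ * (Real.sin u * g u) / Real.sin (ψ - u))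
        = Real.sin ψ * ∫ u in a..θ, Real.sin u * g u / Real.sin (ψ - u) := by
      rw [← intervalIntegral.integral_const_mul]
      apply intervalIntegral.integral_congr
      intro u _
      show Real.sin ψ * (Real.sin u * g u) / Real.sin (ψ - u)
        = Real.sin ψ * (Real.sin u * g u / Real.sin (ψ - u))
      ring
    rw [hΓ]
    simp only [dot]
    rw [key, e1, e2]
    ring
  -- FTC computation
  have hFTC : ∀ θ ∈ Ioo (ψ - π) ψ,
      (∫ u in a..θ, m * Real.cos (ψ - u) / Real.sin (ψ - u))
        = -(m * Real.log (Real.sin (ψ - θ))) := by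
    intro θ hθ
    have hder : ∀ u ∈ Set.uIcc a θ,
        HasDerivAt (fun t => -(m * Real.log (Real.sin (ψ - t))))
          (m * Real.cos (ψ - u) / Real.sin (ψ - u)) u := by
      intro u hu
      have hu' := hsub θ hθ hu
      have hne : Real.sin (ψ - u) ≠ 0 := (hsin u hu').ne'
      have d1 : HasDerivAt (fun t : ℝ => ψ - t) (-1) u := by
        simpa using (hasDerivAt_id u).const_sub ψ
      have d2 : HasDerivAt (fun t => Real.sin (ψ - t)) (Real.cos (ψ - u) * (-1)) u :=
        (Real.hasDerivAt_sin (ψ - u)).comp u d1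
      have d3 : HasDerivAt (fun t => Real.log (Real.sin (ψ - t)))
          ((Real.sin (ψ - u))⁻¹ * (Real.cos (ψ - u) * (-1))) u :=
        by have := (Real.hasDerivAt_log hne).comp u d2; exact this
      have d4 := (d3.const_mul m).neg
      refine d4.congr_deriv ?_
      rw [div_eq_mul_inv]; ring
    have hint : IntervalIntegrable (fun u => m * Real.cos (ψ - u) / Real.sin (ψ - u))
        MeasureTheory.volume a θ :=
      hintf θ hθ _ (continuous_const.mul (Real.continuous_cos.comp (continuous_const.sub continuous_id)))
    rw [intervalIntegral.integral_eq_sub_of_hasDerivAt hder hint]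
    have hpa : ψ - a = π / 2 := by rw [ha]; ring
    rw [hpa, Real.sin_pi_div_two, Real.log_one]
    ring
  -- the main inequality
  have hineq : ∀ θ ∈ Ioo (ψ - π) ψ,
      x₀ * Real.cos ψ + y₀ * Real.sin ψ - m * Real.log (Real.sin (ψ - θ)) ≤
        dot (Γ θ) (Real.cos ψ, Real.sin ψ) := by
    intro θ hθ
    rw [hdot θ hθ]
    have hint1 : IntervalIntegrable (fun u => m * Real.cos (ψ - u) / Real.sin (ψ - u))
        MeasureTheory.volume a θ :=
      hintf θ hθ _ (continuous_const.mul (Real.continuous_cos.comp (continuous_const.sub continuous_id)))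
    have hint2 : IntervalIntegrable (fun u => Real.cos (ψ - u) * g u / Real.sin (ψ - u))
        MeasureTheory.volume a θ :=
      hintf θ hθ _ ((Real.continuous_cos.comp (continuous_const.sub continuous_id)).mul hgc)
    have key : (∫ u in a..θ, m * Real.cos (ψ - u) / Real.sin (ψ - u)) ≤
        ∫ u in a..θ, Real.cos (ψ - u) * g u / Real.sin (ψ - u) := by
      rcases le_total a θ with hle | hle
      · apply intervalIntegral.integral_mono_on hle hint1 hint2
        intro u hu
        have hu' : u ∈ Ioo (ψ - π) ψ := hsub θ hθ (by rw [Set.uIcc_of_le hle]; exact hu)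
        have hs := hsin u hu'
        have hcos : 0 ≤ Real.cos (ψ - u) := by
          apply Real.cos_nonneg_of_mem_Icc
          have h1 : a ≤ u := hu.1
          rw [ha] at h1
          simp only [Set.mem_Icc]
          constructor
          · linarith [hu'.2]
          · linarith
        rw [div_le_div_iff₀ hs hs]
        nlinarith [mul_nonneg (mul_nonneg (sub_nonneg.2 (hmg u)) hcos) hs.le]
      · rw [intervalIntegral.integral_symm θ a, intervalIntegral.integral_symm θ a]
        apply neg_le_neg
        apply intervalIntegral.integral_mono_on hle hint2.symm hint1.symm
        intro u hu
        have hu' : u ∈ Ioo (ψ - π) ψ := hsub θ hθ (by rw [Set.uIcc_of_ge hle]; exact hu)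
        have hs := hsin u hu'
        have hcos : Real.cos (ψ - u) ≤ 0 := by
          apply Real.cos_nonpos_of_pi_div_two_le_of_le
          · have : u ≤ a := hu.2
            rw [ha] at this
            linarith
          · linarith [hu'.1]
        rw [div_le_div_iff₀ hs hs]
        nlinarith [mul_nonneg (mul_nonneg (sub_nonneg.2 (hmg u)) (neg_nonneg.2 hcos)) hs.le]
    have := hFTC θ hθ
    linarith
  have main : ∀ p : ℝ, Real.sin (ψ - p) = 0 →
      Tendsto (fun θ => dot (Γ θ) (Real.cos ψ, Real.sin ψ))
        (nhdsWithin p (Ioo (ψ - π) ψ)) atTop := by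
    intro p hp0
    have hsin_t : Tendsto (fun θ => Real.sin (ψ - θ)) (nhdsWithin p (Ioo (ψ - π) ψ))
        (nhdsWithin 0 (Ioi 0)) := by
      apply tendsto_nhdsWithin_of_tendsto_nhds_of_eventually_within
      · have hc : Continuous (fun θ => Real.sin (ψ - θ)) :=
          Real.continuous_sin.comp (continuous_const.sub continuous_id)
        have := (hc.tendsto p).mono_left (nhdsWithin_le_nhds (s := Ioo (ψ - π) ψ))
        rwa [hp0] at this
      · filter_upwards [self_mem_nhdsWithin] with u hu using hsin u hu
    have hlog : Tendsto (fun θ => Real.log (Real.sin (ψ - θ)))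
        (nhdsWithin p (Ioo (ψ - π) ψ)) atBot :=
      Real.tendsto_log_nhdsGT_zero.comp hsin_t
    have hml : Tendsto (fun θ => m * Real.log (Real.sin (ψ - θ)))
        (nhdsWithin p (Ioo (ψ - π) ψ)) atBot :=
      hlog.const_mul_atBot hmpos
    have hneg : Tendsto (fun θ => -(m * Real.log (Real.sin (ψ - θ))))
        (nhdsWithin p (Ioo (ψ - π) ψ)) atTop := tendsto_neg_atBot_atTop.comp hml
    have hC : Tendsto
        (fun θ => x₀ * Real.cos ψ + y₀ * Real.sin ψ + -(m * Real.log (Real.sin (ψ - θ))))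
        (nhdsWithin p (Ioo (ψ - π) ψ)) atTop :=
      tendsto_atTop_add_const_left _ _ hneg
    apply tendsto_atTop_mono' _ _ hC
    filter_upwards [self_mem_nhdsWithin] with u hu
    have := hineq u hu
    linarith
  exact ⟨hineq, main ψ (by simp), main (ψ - π) (by rw [sub_sub_cancel]; exact Real.sin_pi)⟩
end
end

section
/- Let g : ℝ → ℝ be smooth, 2π-periodic and strictly positive, ψ ∈ ℝ, v = (cos ψ, sin ψ), v^⊥ = (sin ψ, −cos ψ), and let Γ : (ψ − π, ψ) → ℝ² be the translator curve Γ(θ) = (x₀ + ∫_{ψ−π/2}^{θ} cos(u)·g(u)/sin(ψ−u) du, y₀ + ∫_{ψ−π/2}^{θ} sin(u)·g(u)/sin(ψ−u) du). Then ⟨Γ(θ), v^⊥⟩ = x₀ sin ψ − y₀ cos ψ + ∫_{ψ−π/2}^{θ} g(u) du for all θ ∈ (ψ−π, ψ). Consequently Γ lies in a slab parallel to v of width w_g^ψ = ∫_{ψ−π}^{ψ} g(u) du and in no smaller slab; i.e. sup_θ ⟨Γ(θ), v^⊥⟩ − inf_θ ⟨Γ(θ), v^⊥⟩ = ∫_{ψ−π}^{ψ}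 g(u) du. -/
noncomputable section

open Real Set Filter intervalIntegral

/-- For the translator curve
`Γ(θ) = (x₀ + ∫_{ψ−π/2}^θ cos u · g(u)/sin(ψ−u) du, y₀ + ∫_{ψ−π/2}^θ sin u · g(u)/sin(ψ−u) du)`
in direction `v = (cos ψ, sin ψ)`, with `v^⊥ = (sin ψ, −cos ψ)`, one has
`⟨Γ(θ), v^⊥⟩ = x₀ sin ψ − y₀ cos ψ + ∫_{ψ−π/2}^θ g(u) du` for all `θ ∈ (ψ−π, ψ)`;
consequently `Γ` lies in a slab parallel to `v` of width `w_g^ψ = ∫_{ψ−π}^ψ g(u) du` and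
in no smaller slab, i.e. `sup_θ ⟨Γ(θ), v^⊥⟩ − inf_θ ⟨Γ(θ), v^⊥⟩ = ∫_{ψ−π}^ψ g(u) du`. -/
theorem acsf_translator_width
    (g : ℝ → ℝ) (hg : ContDiff ℝ (⊤ : ℕ∞) g) (hgpos : ∀ x, 0 < g x)
    (hgper : Function.Periodic g (2 * π))
    (ψ x₀ y₀ : ℝ)
    (Γ : ℝ → ℝ × ℝ)
    (hΓ : ∀ θ : ℝ, Γ θ =
      (x₀ + ∫ u in (ψ - π / 2)..θ, Real.cos u * g u / Real.sin (ψ - u),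
       y₀ + ∫ u in (ψ - π / 2)..θ, Real.sin u * g u / Real.sin (ψ - u))) :
    (∀ θ ∈ Ioo (ψ - π) ψ,
      dot (Γ θ) (Real.sin ψ, -Real.cos ψ) =
        x₀ * Real.sin ψ - y₀ * Real.cos ψ + ∫ u in (ψ - π / 2)..θ, g u) ∧
    sSup ((fun θ => dot (Γ θ) (Real.sin ψ, -Real.cos ψ)) '' Ioo (ψ - π) ψ) -
        sInf ((fun θ => dot (Γ θ) (Real.sin ψ, -Real.cos ψ)) '' Ioo (ψ - π) ψ) =
      ∫ u in (ψ - π)..ψ, g u := by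

  have hπ : (0:ℝ) < π := Real.pi_pos
  have hgc : Continuous g := hg.continuous
  have key : ∀ θ ∈ Ioo (ψ - π) ψ,
      dot (Γ θ) (Real.sin ψ, -Real.cos ψ) =
        x₀ * Real.sin ψ - y₀ * Real.cos ψ + ∫ u in (ψ - π / 2)..θ, g u := by
    intro θ hθ
    have ha : ψ - π / 2 ∈ Ioo (ψ - π) ψ := by
      constructor <;> [linarith; linarith]
    have hsub : uIcc (ψ - π / 2) θ ⊆ Ioo (ψ - π) ψ := by
      intro u hu
      exact Set.ordConnected_Ioo.uIcc_subset ha hθ hu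
    have hsin : ∀ u ∈ uIcc (ψ - π / 2) θ, Real.sin (ψ - u) ≠ 0 := by
      intro u hu
      obtain ⟨h1, h2⟩ := hsub hu
      have := Real.sin_pos_of_pos_of_lt_pi (x := ψ - u) (by linarith) (by linarith)
      linarith
    have hcontsin : ContinuousOn (fun u => Real.sin (ψ - u)) (uIcc (ψ - π / 2) θ) :=
      (Real.continuous_sin.comp (continuous_const.sub continuous_id)).continuousOn
    have hi1 : IntervalIntegrable (fun u => Real.cos u * g u / Real.sin (ψ - u))
        MeasureTheory.volume (ψ - π / 2) θ := by
      apply ContinuousOn.intervalIntegrable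
      exact ((Real.continuous_cos.mul hgc).continuousOn).div hcontsin hsin
    have hi2 : IntervalIntegrable (fun u => Real.sin u * g u / Real.sin (ψ - u))
        MeasureTheory.volume (ψ - π / 2) θ := by
      apply ContinuousOn.intervalIntegrable
      exact ((Real.continuous_sin.mul hgc).continuousOn).div hcontsin hsin
    rw [hΓ θ]
    simp only [dot]
    have hcomb : Real.sin ψ * (∫ u in (ψ - π / 2)..θ, Real.cos u * g u / Real.sin (ψ - u))
        - Real.cos ψ * (∫ u in (ψ - π / 2)..θ, Real.sin u * g u / Real.sin (ψ - u))
        = ∫ u in (ψ - π / 2)..θ, g u := by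
      rw [← intervalIntegral.integral_const_mul, ← intervalIntegral.integral_const_mul,
        ← intervalIntegral.integral_sub (hi1.const_mul _) (hi2.const_mul _)]
      apply intervalIntegral.integral_congr
      intro u hu
      have h0 := hsin u hu
      have : Real.sin (ψ - u) = Real.sin ψ * Real.cos u - Real.cos ψ * Real.sin u :=
        Real.sin_sub ψ u
      field_simp
      rw [this]
    ring_nf
    ring_nf at hcomb
    linarith [hcomb]
  refine ⟨key, ?_⟩
  set C := x₀ * Real.sin ψ - y₀ * Real.cos ψ with hC
  set F : ℝ → ℝ := fun θ => C + ∫ u in (ψ - π / 2)..θ, g u with hF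
  have hint : ∀ a b : ℝ, IntervalIntegrable g MeasureTheory.volume a b := fun a b =>
    hgc.intervalIntegrable a b
  have hFcont : Continuous F :=
    continuous_const.add (intervalIntegral.continuous_primitive hint _)
  have hFmono : StrictMono F := by
    intro s t hst
    have hpos : 0 < ∫ u in s..t, g u :=
      intervalIntegral.intervalIntegral_pos_of_pos (hint s t) hgpos hst
    have : (∫ u in (ψ - π / 2)..t, g u) - (∫ u in (ψ - π / 2)..s, g u) = ∫ u in s..t, g u :=
      intervalIntegral.integral_interval_sub_left (hint _ _) (hint _ _)
    simp only [hF]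
    linarith
  have himg : (fun θ => dot (Γ θ) (Real.sin ψ, -Real.cos ψ)) '' Ioo (ψ - π) ψ
      = F '' Ioo (ψ - π) ψ := by
    apply Set.image_congr
    intro θ hθ
    exact key θ hθ
  have hab : ψ - π < ψ := by linarith
  have himg2 : F '' Ioo (ψ - π) ψ = Ioo (F (ψ - π)) (F ψ) := by
    apply Set.Subset.antisymm
    · rintro _ ⟨θ, hθ, rfl⟩
      exact ⟨hFmono hθ.1, hFmono hθ.2⟩
    · exact intermediate_value_Ioo hab.le hFcont.continuousOn
  rw [himg, himg2, csSup_Ioo (hFmono hab), csInf_Ioo (hFmono hab)]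
  have : (∫ u in (ψ - π / 2)..ψ, g u) - (∫ u in (ψ - π / 2)..(ψ - π), g u)
      = ∫ u in (ψ - π)..ψ, g u :=
    intervalIntegral.integral_interval_sub_left (hint _ _) (hint _ _)
  simp only [hF]
  linarith
end
end

section
/- Let g : ℝ → ℝ be smooth, 2π-periodic and strictly positive, let v = (cos ψ, sin ψ) be a unit vector and w > 0. Then there exists a translating solution to anisotropic curve shortening flow with respect to g, travelling in the direction v, that lies in a slab parallel to v of width w and in no smaller slab; it is unique up to translations in space and time, and it travels with speed w_g^ψ/w, where w_g^ψ = ∫_{ψ−π}^{ψ} g(u) du. -/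
noncomputable section

open Real Set Filter intervalIntegral

/-- A strictly convex plane curve parametrized by its tangent angle `θ ∈ (ψ−π, ψ)`:
`κ` is positive and `Γ'(θ) = κ(θ)⁻¹ · (cos θ, sin θ)`. -/
def TangentAngleParam (ψ : ℝ) (Γ : ℝ → ℝ × ℝ) (κ : ℝ → ℝ) : Prop :=
  (∀ θ ∈ Set.Ioo (ψ - π) ψ, 0 < κ θ) ∧
  ∀ θ ∈ Set.Ioo (ψ - π) ψ,
    HasDerivAt Γ ((κ θ)⁻¹ • ((Real.cos θ, Real.sin θ) : ℝ × ℝ)) θ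

/-- The curve translates with speed `c` in direction `v = (cos ψ, sin ψ)` under
anisotropic curve shortening flow with respect to `g`: the family `X(·, t) = Γ + ct·v`
has normal velocity `⟨c·v, N(θ)⟩` equal to `−g(θ)κ(θ)`. -/
def SpeedTranslator (g : ℝ → ℝ) (ψ c : ℝ) (κ : ℝ → ℝ) : Prop :=
  ∀ θ ∈ Set.Ioo (ψ - π) ψ,
    c * dot (Real.cos ψ, Real.sin ψ) (Real.sin θ, -Real.cos θ) = -(g θ * κ θ)

/-- The curve `Γ` (with tangent angles in `(ψ−π, ψ)`) lies in a slab parallel to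
`v = (cos ψ, sin ψ)` of width `w` and in no smaller slab. -/
def InSlabOfExactWidth (ψ : ℝ) (Γ : ℝ → ℝ × ℝ) (w : ℝ) : Prop :=
  (∃ a : ℝ, ∀ θ ∈ Set.Ioo (ψ - π) ψ,
    dot (Γ θ) (Real.sin ψ, -Real.cos ψ) ∈ Set.Ioo a (a + w)) ∧
  ∀ a' w' : ℝ, (∀ θ ∈ Set.Ioo (ψ - π) ψ,
    dot (Γ θ) (Real.sin ψ, -Real.cos ψ) ∈ Set.Icc a' (a' + w')) → w ≤ w'

open Topology in
/-- If a continuous function maps an open interval into a closed interval, then the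
values at the endpoints lie in the closed interval as well. -/
lemma endpoint_bounds_aux {l r a b : ℝ} (hlr : l < r) (φ : ℝ → ℝ) (hφ : Continuous φ)
    (h : ∀ θ ∈ Set.Ioo l r, φ θ ∈ Set.Icc a b) : a ≤ φ l ∧ φ r ≤ b := by
  constructor
  · have ht : Tendsto φ (𝓝[>] l) (𝓝 (φ l)) := (hφ.tendsto l).mono_left nhdsWithin_le_nhds
    refine ge_of_tendsto ht ?_
    filter_upwards [Ioo_mem_nhdsGT hlr] with θ hθ
    exact (h θ hθ).1
  · have ht : Tendsto φ (𝓝[<] r) (𝓝 (φ r)) := (hφ.tendsto r).mono_left nhdsWithin_le_nhds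
    refine le_of_tendsto ht ?_
    filter_upwards [Ioo_mem_nhdsLT hlr] with θ hθ
    exact (h θ hθ).2

/-- Given a slab of width `w` parallel to `v = (cos ψ, sin ψ)`, there
exists a translating solution to anisotropic curve shortening flow with respect to `g`
travelling in direction `v`, lying in a slab parallel to `v` of width `w` and in no
smaller slab; it travels with speed `w_g^ψ / w` where `w_g^ψ = ∫_{ψ−π}^ψ g(u) du`, and it
is unique up to translations in space and time. -/
theorem acsf_translator_in_slab
    (g : ℝ → ℝ) (hg : ContDiff ℝ (⊤ : ℕ∞) g) (hgpos : ∀ x, 0 < g x)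
    (hgper : Function.Periodic g (2 * π))
    (ψ w : ℝ) (hw : 0 < w) :
    ∃ (Γ : ℝ → ℝ × ℝ) (κ : ℝ → ℝ) (c : ℝ),
      c = (∫ u in (ψ - π)..ψ, g u) / w ∧ 0 < c ∧
      TangentAngleParam ψ Γ κ ∧
      SpeedTranslator g ψ c κ ∧
      InSlabOfExactWidth ψ Γ w ∧
      -- uniqueness up to translations in space and time: any other translating solution
      -- in a slab of width `w` and no smaller has the same speed and is a spatial
      -- translate of this one (a time translation of a translator being a spatial
      -- translation along `v`)
      ∀ (Γ' : ℝ → ℝ × ℝ) (κ' : ℝ → ℝ) (c' : ℝ), 0 < c' →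
        TangentAngleParam ψ Γ' κ' →
        SpeedTranslator g ψ c' κ' →
        InSlabOfExactWidth ψ Γ' w →
        c' = c ∧ ∃ z : ℝ × ℝ, ∀ θ ∈ Set.Ioo (ψ - π) ψ, Γ' θ = Γ θ + z := by
  have hπ : (0:ℝ) < π := Real.pi_pos
  have hgc : Continuous g := hg.continuous
  have hgne : ∀ x, g x ≠ 0 := fun x => (hgpos x).ne'
  have gint : ∀ x y : ℝ, IntervalIntegrable g MeasureTheory.volume x y :=
    fun x y => hgc.intervalIntegrable x y
  have hIopen : IsOpen (Set.Ioo (ψ - π) ψ) := isOpen_Ioo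
  obtain ⟨θ₀, hθ₀def⟩ : ∃ θ₀ : ℝ, θ₀ = ψ - π/2 := ⟨_, rfl⟩
  have hθ₀ : θ₀ ∈ Set.Ioo (ψ - π) ψ := by rw [hθ₀def]; constructor <;> linarith
  obtain ⟨G, hGdef⟩ : ∃ G : ℝ → ℝ, G = fun θ => ∫ s in θ₀..θ, g s := ⟨_, rfl⟩
  have hGderiv : ∀ θ : ℝ, HasDerivAt G (g θ) θ := by
    intro θ
    rw [hGdef]
    exact intervalIntegral.integral_hasDerivAt_right (gint _ _)
      (hgc.stronglyMeasurableAtFilter _ _) hgc.continuousAt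
  have hGcont : Continuous G :=
    continuous_iff_continuousAt.mpr fun θ => (hGderiv θ).continuousAt
  have hGsub : ∀ x y : ℝ, G y - G x = ∫ u in x..y, g u := by
    intro x y
    have h := intervalIntegral.integral_add_adjacent_intervals (gint θ₀ x) (gint x y)
    rw [hGdef]
    simp only
    linarith
  have hGmono : StrictMono G := by
    intro x y hxy
    have h1 : 0 < ∫ u in x..y, g u :=
      intervalIntegral.intervalIntegral_pos_of_pos (gint x y) hgpos hxy
    have h2 := hGsub x y
    linarith
  obtain ⟨c, hcdef⟩ : ∃ c : ℝ, c = (∫ u in (ψ - π)..ψ, g u) / w := ⟨_, rfl⟩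
  have hc : 0 < c := hcdef ▸
    div_pos (intervalIntegral.intervalIntegral_pos_of_pos (gint _ _) hgpos (by linarith)) hw
  have hcw : c * w = G ψ - G (ψ - π) := by
    rw [hGsub, hcdef]; field_simp
  obtain ⟨κ, hκdef⟩ : ∃ κ : ℝ → ℝ, κ = fun θ => c * Real.sin (ψ - θ) / g θ := ⟨_, rfl⟩
  have hsin : ∀ θ ∈ Set.Ioo (ψ - π) ψ, 0 < Real.sin (ψ - θ) := by
    intro θ hθ
    exact Real.sin_pos_of_pos_of_lt_pi (by linarith [hθ.2]) (by linarith [hθ.1])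
  have hκpos : ∀ θ ∈ Set.Ioo (ψ - π) ψ, 0 < κ θ := fun θ hθ => by
    rw [hκdef]; exact div_pos (mul_pos hc (hsin θ hθ)) (hgpos θ)
  have hκcont : Continuous κ := by
    rw [hκdef]
    exact (continuous_const.mul
      (Real.continuous_sin.comp (continuous_const.sub continuous_id))).div hgc hgne
  obtain ⟨f1, hf1def⟩ : ∃ f1 : ℝ → ℝ, f1 = fun θ => (κ θ)⁻¹ * Real.cos θ := ⟨_, rfl⟩
  obtain ⟨f2, hf2def⟩ : ∃ f2 : ℝ → ℝ, f2 = fun θ => (κ θ)⁻¹ * Real.sin θ := ⟨_, rfl⟩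
  have hκinvc : ContinuousOn (fun θ => (κ θ)⁻¹) (Set.Ioo (ψ - π) ψ) :=
    ContinuousOn.inv₀ hκcont.continuousOn (fun θ hθ => (hκpos θ hθ).ne')
  have hf1c : ContinuousOn f1 (Set.Ioo (ψ - π) ψ) :=
    hf1def ▸ hκinvc.mul Real.continuous_cos.continuousOn
  have hf2c : ContinuousOn f2 (Set.Ioo (ψ - π) ψ) :=
    hf2def ▸ hκinvc.mul Real.continuous_sin.continuousOn
  have huIcc : ∀ θ ∈ Set.Ioo (ψ - π) ψ, Set.uIcc θ₀ θ ⊆ Set.Ioo (ψ - π) ψ := fun θ hθ =>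
    Set.ordConnected_Ioo.uIcc_subset hθ₀ hθ
  have hf1int : ∀ θ ∈ Set.Ioo (ψ - π) ψ, IntervalIntegrable f1 MeasureTheory.volume θ₀ θ :=
    fun θ hθ => (hf1c.mono (huIcc θ hθ)).intervalIntegrable
  have hf2int : ∀ θ ∈ Set.Ioo (ψ - π) ψ, IntervalIntegrable f2 MeasureTheory.volume θ₀ θ :=
    fun θ hθ => (hf2c.mono (huIcc θ hθ)).intervalIntegrable
  obtain ⟨Γ, hΓdef⟩ : ∃ Γ : ℝ → ℝ × ℝ,
      Γ = fun θ => ((∫ s in θ₀..θ, f1 s, ∫ s in θ₀..θ, f2 s) : ℝ × ℝ) := ⟨_, rfl⟩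
  have hΓ1 : ∀ θ ∈ Set.Ioo (ψ - π) ψ,
      HasDerivAt (fun t => ∫ s in θ₀..t, f1 s) (f1 θ) θ := fun θ hθ =>
    intervalIntegral.integral_hasDerivAt_right (hf1int θ hθ)
      (hf1c.stronglyMeasurableAtFilter hIopen θ hθ)
      (hf1c.continuousAt (hIopen.mem_nhds hθ))
  have hΓ2 : ∀ θ ∈ Set.Ioo (ψ - π) ψ,
      HasDerivAt (fun t => ∫ s in θ₀..t, f2 s) (f2 θ) θ := fun θ hθ =>
    intervalIntegral.integral_hasDerivAt_right (hf2int θ hθ)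
      (hf2c.stronglyMeasurableAtFilter hIopen θ hθ)
      (hf2c.continuousAt (hIopen.mem_nhds hθ))
  have hΓderiv : ∀ θ ∈ Set.Ioo (ψ - π) ψ,
      HasDerivAt Γ ((κ θ)⁻¹ • ((Real.cos θ, Real.sin θ) : ℝ × ℝ)) θ := by
    intro θ hθ
    have h := (hΓ1 θ hθ).prodMk (hΓ2 θ hθ)
    rw [hΓdef]
    convert h using 1
    rw [hf1def, hf2def]
    simp [Prod.smul_def, smul_eq_mul]
  have key : ∀ s ∈ Set.Ioo (ψ - π) ψ,
      Real.sin ψ * f1 s + (-Real.cos ψ) * f2 s = c⁻¹ * g s := by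
    intro s hsI
    have hs0 : Real.sin (ψ - s) ≠ 0 := (hsin s hsI).ne'
    have hc0 : c ≠ 0 := hc.ne'
    rw [hf1def, hf2def, hκdef]
    simp only
    rw [Real.sin_sub] at hs0 ⊢
    field_simp
    ring
  have hdot : ∀ θ ∈ Set.Ioo (ψ - π) ψ,
      dot (Γ θ) (Real.sin ψ, -Real.cos ψ) = c⁻¹ * (G θ - G θ₀) := by
    intro θ hθ
    have hcongr : (∫ s in θ₀..θ, (Real.sin ψ * f1 s + (-Real.cos ψ) * f2 s))
        = ∫ s in θ₀..θ, c⁻¹ * g s :=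
      intervalIntegral.integral_congr fun s hs => key s (huIcc θ hθ hs)
    have e1 : dot (Γ θ) (Real.sin ψ, -Real.cos ψ)
        = Real.sin ψ * (∫ s in θ₀..θ, f1 s) + (-Real.cos ψ) * ∫ s in θ₀..θ, f2 s := by
      rw [hΓdef]; simp [dot]; ring
    rw [e1, ← intervalIntegral.integral_const_mul, ← intervalIntegral.integral_const_mul,
      ← intervalIntegral.integral_add ((hf1int θ hθ).const_mul _) ((hf2int θ hθ).const_mul _),
      hcongr, intervalIntegral.integral_const_mul, ← hGsub]
  -- general width bound for affine functions of G constrained to a closed slab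
  have widthbound : ∀ A B a' w' : ℝ, 0 < B →
      (∀ θ ∈ Set.Ioo (ψ - π) ψ, A + B * G θ ∈ Set.Icc a' (a' + w')) →
      B * (G ψ - G (ψ - π)) ≤ w' := by
    intro A B a' w' hB hIn
    have hφ : Continuous fun θ => A + B * G θ := continuous_const.add (continuous_const.mul hGcont)
    have hb := endpoint_bounds_aux (show ψ - π < ψ by linarith) _ hφ hIn
    nlinarith [hb.1, hb.2]
  have hcwinv : c⁻¹ * (G ψ - G (ψ - π)) = w := by
    rw [← hcw]; field_simp
  -- slab of exact width for Γ
  have slab1 : ∀ θ ∈ Set.Ioo (ψ - π) ψ, dot (Γ θ) (Real.sin ψ, -Real.cos ψ)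
      ∈ Set.Ioo (c⁻¹ * (G (ψ - π) - G θ₀)) (c⁻¹ * (G (ψ - π) - G θ₀) + w) := by
    intro θ hθ
    rw [hdot θ hθ]
    have h1 : G (ψ - π) < G θ := hGmono hθ.1
    have h2 : G θ < G ψ := hGmono hθ.2
    have hcinv : 0 < c⁻¹ := inv_pos.mpr hc
    constructor
    · have := mul_lt_mul_of_pos_left (sub_lt_sub_right h1 (G θ₀)) hcinv
      linarith
    · have := mul_lt_mul_of_pos_left (sub_lt_sub_right h2 (G θ₀)) hcinv
      have hw' : c⁻¹ * (G ψ - G θ₀) = c⁻¹ * (G (ψ - π) - G θ₀) + w := by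
        rw [← hcwinv]; ring
      linarith
  have slab2 : ∀ a' w' : ℝ, (∀ θ ∈ Set.Ioo (ψ - π) ψ,
      dot (Γ θ) (Real.sin ψ, -Real.cos ψ) ∈ Set.Icc a' (a' + w')) → w ≤ w' := by
    intro a' w' hIn
    have h := widthbound (-(c⁻¹ * G θ₀)) c⁻¹ a' w' (inv_pos.mpr hc) ?_
    · linarith [hcwinv]
    · intro θ hθ
      have h2 := hIn θ hθ
      rw [hdot θ hθ] at h2
      have he : -(c⁻¹ * G θ₀) + c⁻¹ * G θ = c⁻¹ * (G θ - G θ₀) := by ring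
      rw [he]
      exact h2
  refine ⟨Γ, κ, c, hcdef, hc, ⟨hκpos, hΓderiv⟩, ?_, ⟨⟨_, slab1⟩, slab2⟩, ?_⟩
  · -- SpeedTranslator
    intro θ hθ
    have hκθ : κ θ = c * Real.sin (ψ - θ) / g θ := by rw [hκdef]
    simp only [dot, hκθ]
    rw [Real.sin_sub]
    field_simp [hgne θ]
    ring
  · -- uniqueness
    rintro Γ' κ' c' hc' ⟨hκ'pos, hΓ'deriv⟩ hsp' ⟨⟨a₂, hin'⟩, hmin'⟩
    have hκ'eq : ∀ θ ∈ Set.Ioo (ψ - π) ψ, κ' θ = c' * Real.sin (ψ - θ) / g θ := by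
      intro θ hθ
      have h := hsp' θ hθ
      simp only [dot] at h
      have hg0 := hgne θ
      rw [Real.sin_sub]
      field_simp [hgne θ]
      linear_combination h
    -- derivative of the height function of Γ'
    have hd' : ∀ θ ∈ Set.Ioo (ψ - π) ψ,
        HasDerivAt (fun t => dot (Γ' t) (Real.sin ψ, -Real.cos ψ)) (c'⁻¹ * g θ) θ := by
      intro θ hθ
      have hD := hΓ'deriv θ hθ
      have hL1 : HasDerivAt (fun t => (Γ' t).1)
          (((κ' θ)⁻¹ • ((Real.cos θ, Real.sin θ) : ℝ × ℝ)).1) θ := by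
        have := hasFDerivAt_fst.comp_hasDerivAt θ hD
        simpa [Function.comp_def] using this
      have hL2 : HasDerivAt (fun t => (Γ' t).2)
          (((κ' θ)⁻¹ • ((Real.cos θ, Real.sin θ) : ℝ × ℝ)).2) θ := by
        have := hasFDerivAt_snd.comp_hasDerivAt θ hD
        simpa [Function.comp_def] using this
      have hcomb := (hL1.mul_const (Real.sin ψ)).add (hL2.mul_const (-Real.cos ψ))
      have heq : (((κ' θ)⁻¹ • ((Real.cos θ, Real.sin θ) : ℝ × ℝ)).1 * Real.sin ψ
          + ((κ' θ)⁻¹ • ((Real.cos θ, Real.sin θ) : ℝ × ℝ)).2 * (-Real.cos ψ))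
          = c'⁻¹ * g θ := by
        have hs0 : Real.sin (ψ - θ) ≠ 0 := (hsin θ hθ).ne'
        have hc0 : c' ≠ 0 := hc'.ne'
        have hg0 := hgne θ
        rw [hκ'eq θ hθ]
        simp only [Prod.smul_fst, Prod.smul_snd, smul_eq_mul]
        rw [Real.sin_sub] at hs0 ⊢
        field_simp
        ring
      rw [heq] at hcomb
      exact hcomb
    -- fundamental theorem of calculus for the height of Γ'
    have hFTC' : ∀ θ ∈ Set.Ioo (ψ - π) ψ,
        dot (Γ' θ) (Real.sin ψ, -Real.cos ψ) - dot (Γ' θ₀) (Real.sin ψ, -Real.cos ψ)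
          = c'⁻¹ * (G θ - G θ₀) := by
      intro θ hθ
      have hderiv : ∀ x ∈ Set.uIcc θ₀ θ,
          HasDerivAt (fun t => dot (Γ' t) (Real.sin ψ, -Real.cos ψ)) (c'⁻¹ * g x) x :=
        fun x hx => hd' x (huIcc θ hθ hx)
      have hint : IntervalIntegrable (fun x => c'⁻¹ * g x) MeasureTheory.volume θ₀ θ :=
        (gint θ₀ θ).const_mul _
      have h := intervalIntegral.integral_eq_sub_of_hasDerivAt hderiv hint
      rw [intervalIntegral.integral_const_mul, ← hGsub] at h
      linarith
    have heq' : ∀ θ ∈ Set.Ioo (ψ - π) ψ, dot (Γ' θ) (Real.sin ψ, -Real.cos ψ)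
        = (dot (Γ' θ₀) (Real.sin ψ, -Real.cos ψ) - c'⁻¹ * G θ₀) + c'⁻¹ * G θ := by
      intro θ hθ
      have := hFTC' θ hθ
      linarith [mul_sub c'⁻¹ (G θ) (G θ₀)]
    have hc'inv : 0 < c'⁻¹ := inv_pos.mpr hc'
    -- c ≤ c'
    have hle1 : c ≤ c' := by
      have h := widthbound (dot (Γ' θ₀) (Real.sin ψ, -Real.cos ψ) - c'⁻¹ * G θ₀) c'⁻¹ a₂ w
        hc'inv ?_
      · -- c'⁻¹ * (G ψ - G (ψ - π)) ≤ w, and G ψ - G (ψ-π) = c * w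
        rw [← hcw] at h
        have h2 : c * w ≤ c' * w := by
          calc c * w = c' * (c'⁻¹ * (c * w)) := by field_simp
          _ ≤ c' * w := by nlinarith
        exact le_of_mul_le_mul_right h2 hw
      · intro θ hθ
        rw [← heq' θ hθ]
        exact Set.mem_Icc_of_Ioo (hin' θ hθ)
    -- c' ≤ c
    have hle2 : c' ≤ c := by
      have h := hmin' (dot (Γ' θ₀) (Real.sin ψ, -Real.cos ψ) - c'⁻¹ * G θ₀ + c'⁻¹ * G (ψ - π))
        (c'⁻¹ * (G ψ - G (ψ - π))) ?_
      · rw [← hcw] at h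
        have h2 : c' * w ≤ c' * (c'⁻¹ * (c * w)) := by nlinarith
        have h3 : c' * (c'⁻¹ * (c * w)) = c * w := by field_simp
        have h4 : c' * w ≤ c * w := by linarith
        exact le_of_mul_le_mul_right h4 hw
      · intro θ hθ
        rw [heq' θ hθ]
        have h1 : G (ψ - π) ≤ G θ := (hGmono hθ.1).le
        have h2 : G θ ≤ G ψ := (hGmono hθ.2).le
        constructor
        · have := mul_le_mul_of_nonneg_left h1 hc'inv.le
          linarith
        · have := mul_le_mul_of_nonneg_left h2 hc'inv.le
          linarith [mul_sub c'⁻¹ (G ψ) (G (ψ - π))]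
    have hceq : c' = c := le_antisymm hle2 hle1
    refine ⟨hceq, Γ' θ₀ - Γ θ₀, ?_⟩
    -- componentwise FTC identifies Γ' with Γ up to a constant
    have hκκ' : ∀ x ∈ Set.Ioo (ψ - π) ψ, κ' x = κ x := by
      intro x hx
      rw [hκ'eq x hx, hκdef, hceq]
    have hF1' : ∀ x ∈ Set.Ioo (ψ - π) ψ, HasDerivAt (fun t => (Γ' t).1) (f1 x) x := by
      intro x hx
      have hD := hΓ'deriv x hx
      have h := hasFDerivAt_fst.comp_hasDerivAt x hD
      have : f1 x = (((κ' x)⁻¹ • ((Real.cos x, Real.sin x) : ℝ × ℝ)).1) := by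
        rw [hf1def, hκκ' x hx]
        simp [smul_eq_mul]
      rw [this]
      simpa [Function.comp_def] using h
    have hF2' : ∀ x ∈ Set.Ioo (ψ - π) ψ, HasDerivAt (fun t => (Γ' t).2) (f2 x) x := by
      intro x hx
      have hD := hΓ'deriv x hx
      have h := hasFDerivAt_snd.comp_hasDerivAt x hD
      have : f2 x = (((κ' x)⁻¹ • ((Real.cos x, Real.sin x) : ℝ × ℝ)).2) := by
        rw [hf2def, hκκ' x hx]
        simp [smul_eq_mul]
      rw [this]
      simpa [Function.comp_def] using h
    intro θ hθ
    have e1 : (Γ' θ).1 - (Γ' θ₀).1 = ∫ s in θ₀..θ, f1 s :=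
      (intervalIntegral.integral_eq_sub_of_hasDerivAt
        (fun x hx => hF1' x (huIcc θ hθ hx)) (hf1int θ hθ)).symm
    have e2 : (Γ' θ).2 - (Γ' θ₀).2 = ∫ s in θ₀..θ, f2 s :=
      (intervalIntegral.integral_eq_sub_of_hasDerivAt
        (fun x hx => hF2' x (huIcc θ hθ hx)) (hf2int θ hθ)).symm
    have hΓθ : Γ θ = ((∫ s in θ₀..θ, f1 s, ∫ s in θ₀..θ, f2 s) : ℝ × ℝ) := by rw [hΓdef]
    have hΓθ₀ : Γ θ₀ = ((0, 0) : ℝ × ℝ) := by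
      rw [hΓdef]; simp [intervalIntegral.integral_same]
    apply Prod.ext
    · simp only [Prod.fst_add, Prod.fst_sub, hΓθ, hΓθ₀]
      linarith [e1]
    · simp only [Prod.snd_add, Prod.snd_sub, hΓθ, hΓθ₀]
      linarith [e2]
end
end

section
/- Let g : ℝ → ℝ be continuous, 2π-periodic and strictly positive, let M = sup g and let R > M. Suppose θ⁻ ∈ (−π/2, 0] and θ⁺ ∈ [0, π/2) satisfy ∫_0^{θ⁺} g(u) tan u du = R and ∫_0^{θ⁻} g(u) tan u du = R. Then sec(θ⁺) ≥ R/M and sec(θ⁻) ≥ R/M, and ∫_{θ⁻}^{θ⁺} g(u) du ≥ ∫_{−π/2}^{π/2} g(u) du − 2M·arcsin(M/R). -/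
noncomputable section

open Real Set Filter intervalIntegral

private lemma acsf_aux_bounds (M R c : ℝ) (hM : 0 < M) (hR : M < R) (hc : 0 < c)
    (h : R ≤ M / c * (1 - c)) : R / M ≤ 1 / c ∧ c ≤ M / R := by
  have hRpos : 0 < R := hM.trans hR
  have h' : R * c ≤ M * (1 - c) := by
    rw [div_mul_eq_mul_div, le_div_iff₀ hc] at h
    linarith
  have h'' : R * c ≤ M := by nlinarith
  constructor
  · rw [div_le_div_iff₀ hM hc]
    linarith
  · rw [le_div_iff₀ hRpos]
    linarith [mul_comm R c]

/-- Let `g` be continuous, `2π`-periodic and strictly positive, with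
`M = sup g`, and let `R > M`. If `θ⁻ ∈ (−π/2, 0]` and `θ⁺ ∈ [0, π/2)` satisfy
`∫_0^{θ⁺} g(u) tan u du = R` and `∫_0^{θ⁻} g(u) tan u du = R`, then
`sec θ⁺ ≥ R/M`, `sec θ⁻ ≥ R/M`, and
`∫_{θ⁻}^{θ⁺} g ≥ ∫_{−π/2}^{π/2} g − 2 M arcsin (M/R)`. -/
theorem acsf_horizontal_reach_estimate
    (g : ℝ → ℝ) (hgc : Continuous g) (hgpos : ∀ x, 0 < g x)
    (hgper : Function.Periodic g (2 * π))
    (M : ℝ) (hM : IsLUB (Set.range g) M)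
    (R : ℝ) (hR : M < R)
    (θm θp : ℝ) (hθm : θm ∈ Ioc (-(π / 2)) 0) (hθp : θp ∈ Ico 0 (π / 2))
    (hIm : (∫ u in (0 : ℝ)..θm, g u * Real.tan u) = R)
    (hIp : (∫ u in (0 : ℝ)..θp, g u * Real.tan u) = R) :
    R / M ≤ 1 / Real.cos θp ∧
    R / M ≤ 1 / Real.cos θm ∧
    (∫ u in (-(π / 2))..(π / 2), g u) - 2 * M * Real.arcsin (M / R) ≤
      ∫ u in θm..θp, g u := by
  obtain ⟨hθm1, hθm2⟩ := hθm
  obtain ⟨hθp1, hθp2⟩ := hθp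
  have hπ := Real.pi_pos
  have hgM : ∀ x, g x ≤ M := fun x => hM.1 ⟨x, rfl⟩
  have hMpos : 0 < M := lt_of_lt_of_le (hgpos 0) (hgM 0)
  have hRpos : 0 < R := hMpos.trans hR
  have hcosp : 0 < Real.cos θp := Real.cos_pos_of_mem_Ioo ⟨by linarith, hθp2⟩
  have hcosm : 0 < Real.cos θm := Real.cos_pos_of_mem_Ioo ⟨hθm1, by linarith⟩
  have htan_int : ∀ a b : ℝ, Set.uIcc a b ⊆ Ioo (-(π/2)) (π/2) →
      IntervalIntegrable (fun u => g u * Real.tan u) MeasureTheory.volume a b := by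
    intro a b hsub
    exact ((hgc.continuousOn).mul (Real.continuousOn_tan_Ioo.mono hsub)).intervalIntegrable
  -- positive side
  have hkeyp : R ≤ M / Real.cos θp * (1 - Real.cos θp) := by
    have hmono : (∫ u in (0:ℝ)..θp, g u * Real.tan u) ≤
        ∫ u in (0:ℝ)..θp, (M / Real.cos θp) * Real.sin u := by
      apply intervalIntegral.integral_mono_on hθp1
      · apply htan_int
        rw [Set.uIcc_of_le hθp1]
        exact fun x hx => ⟨by linarith [hx.1], lt_of_le_of_lt hx.2 hθp2⟩
      · exact (Continuous.intervalIntegrable (by continuity) _ _)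
      · intro u hu
        have hsu : 0 ≤ Real.sin u := Real.sin_nonneg_of_nonneg_of_le_pi hu.1 (by linarith [hu.2])
        have hcu : Real.cos θp ≤ Real.cos u :=
          Real.cos_le_cos_of_nonneg_of_le_pi hu.1 (by linarith) hu.2
        have hdiv : Real.sin u / Real.cos u ≤ Real.sin u / Real.cos θp :=
          div_le_div_of_nonneg_left hsu hcosp hcu
        calc g u * Real.tan u = g u * (Real.sin u / Real.cos u) := by
              rw [Real.tan_eq_sin_div_cos]
          _ ≤ M * (Real.sin u / Real.cos θp) :=
              mul_le_mul (hgM u) hdiv (div_nonneg hsu (hcosp.trans_le hcu).le) hMpos.le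
          _ = (M / Real.cos θp) * Real.sin u := by ring
    rw [hIp, intervalIntegral.integral_const_mul, integral_sin, Real.cos_zero] at hmono
    exact hmono
  -- negative side
  have hkeym : R ≤ M / Real.cos θm * (1 - Real.cos θm) := by
    have hmono : (∫ u in θm..(0:ℝ), -(g u * Real.tan u)) ≤
        ∫ u in θm..(0:ℝ), (M / Real.cos θm) * (-Real.sin u) := by
      apply intervalIntegral.integral_mono_on hθm2
      · apply IntervalIntegrable.neg
        apply htan_int
        rw [Set.uIcc_of_le hθm2]
        exact fun x hx => ⟨lt_of_lt_of_le hθm1 hx.1, by linarith [hx.2]⟩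
      · exact (Continuous.intervalIntegrable (by continuity) _ _)
      · intro u hu
        have hsu : Real.sin u ≤ 0 := Real.sin_nonpos_of_nonpos_of_neg_pi_le hu.2 (by linarith [hu.1])
        have hcu : Real.cos θm ≤ Real.cos u := by
          rw [← Real.cos_neg u, ← Real.cos_neg θm]
          exact Real.cos_le_cos_of_nonneg_of_le_pi (by linarith [hu.2]) (by linarith)
            (by linarith [hu.1])
        have hdiv : -Real.sin u / Real.cos u ≤ -Real.sin u / Real.cos θm :=
          div_le_div_of_nonneg_left (by linarith) hcosm hcu
        calc -(g u * Real.tan u) = g u * (-Real.sin u / Real.cos u) := by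
              rw [Real.tan_eq_sin_div_cos]; ring
          _ ≤ M * (-Real.sin u / Real.cos θm) :=
              mul_le_mul (hgM u) hdiv (div_nonneg (by linarith) (hcosm.trans_le hcu).le) hMpos.le
          _ = (M / Real.cos θm) * (-Real.sin u) := by ring
    rw [intervalIntegral.integral_neg, ← intervalIntegral.integral_symm, hIm,
      intervalIntegral.integral_const_mul] at hmono
    have : (∫ u in θm..(0:ℝ), -Real.sin u) = 1 - Real.cos θm := by
      rw [intervalIntegral.integral_neg, integral_sin, Real.cos_zero]; ring
    rw [this] at hmono
    linarith
  obtain ⟨hsecp, hcMp⟩ := acsf_aux_bounds M R (Real.cos θp) hMpos hR hcosp hkeyp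
  obtain ⟨hsecm, hcMm⟩ := acsf_aux_bounds M R (Real.cos θm) hMpos hR hcosm hkeym
  refine ⟨hsecp, hsecm, ?_⟩
  -- angle bounds
  have hap : π/2 - θp ≤ Real.arcsin (M / R) := by
    have h1 : Real.sin (π/2 - θp) = Real.cos θp := Real.sin_pi_div_two_sub θp
    have h2 := Real.monotone_arcsin (show Real.sin (π/2 - θp) ≤ M/R by rw [h1]; exact hcMp)
    rwa [Real.arcsin_sin (by linarith) (by linarith)] at h2
  have ham : π/2 + θm ≤ Real.arcsin (M / R) := by
    have h1 : Real.sin (π/2 + θm) = Real.cos θm := by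
      rw [show π/2 + θm = π/2 - (-θm) by ring, Real.sin_pi_div_two_sub, Real.cos_neg]
    have h2 := Real.monotone_arcsin (show Real.sin (π/2 + θm) ≤ M/R by rw [h1]; exact hcMm)
    rwa [Real.arcsin_sin (by linarith) (by linarith)] at h2
  -- splitting the integral
  have hgint : ∀ a b : ℝ, IntervalIntegrable g MeasureTheory.volume a b :=
    fun a b => hgc.intervalIntegrable a b
  have hsplit : (∫ u in (-(π/2))..(π/2), g u) =
      (∫ u in (-(π/2))..θm, g u) + ((∫ u in θm..θp, g u) + ∫ u in θp..(π/2), g u) := by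
    rw [intervalIntegral.integral_add_adjacent_intervals (hgint _ _) (hgint _ _),
      intervalIntegral.integral_add_adjacent_intervals (hgint _ _) (hgint _ _)]
  have hI1 : (∫ u in (-(π/2))..θm, g u) ≤ M * (θm + π/2) := by
    have h := intervalIntegral.integral_mono_on (by linarith : -(π/2) ≤ θm) (hgint _ _)
      (intervalIntegrable_const) (fun u _ => hgM u)
    rw [intervalIntegral.integral_const, smul_eq_mul] at h
    linarith
  have hI3 : (∫ u in θp..(π/2), g u) ≤ M * (π/2 - θp) := by
    have h := intervalIntegral.integral_mono_on (by linarith : θp ≤ π/2) (hgint _ _)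
      (intervalIntegrable_const) (fun u _ => hgM u)
    rw [intervalIntegral.integral_const, smul_eq_mul] at h
    linarith
  have hm1 : M * (θm + π/2) ≤ M * Real.arcsin (M/R) := by
    exact mul_le_mul_of_nonneg_left (by linarith : θm + π/2 ≤ Real.arcsin (M/R)) hMpos.le
  have hm3 : M * (π/2 - θp) ≤ M * Real.arcsin (M/R) := by
    exact mul_le_mul_of_nonneg_left hap hMpos.le
  linarith
end
end
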